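/- Let T be a finite rooted tree with n nodes equipped with a rank labeling r assigning a natural number to each node, and suppose that for every node v of T there exist r(v) pairwise distinct children c_1, …, c_{r(v)} of v such that for each i with 1 ≤ i ≤ r(v) and r(v) − i − 1 ≥ 0, r(c_i) ≥ r(v) − i − 1. Then r(root) ≤ log n / log φ, where φ = (1 + √5)/2 is the golden ratio and root is the root of T. -/

import Mathlib

/-!
By the rank invariant, a node of rank `r` has distinct children whose ranks are at least
`r - 2, r - 3, …, 0, 0`, so by induction a tree whose root has rank `r` has at least
`1 + F₁ + ⋯ + F_r = F_{r+2}` nodes. Binet's formula gives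
`φ ^ r = F_{r+1} - ψ F_r ≤ F_{r+1} + F_r = F_{r+2}`, since `-1 < ψ`; take logarithms.
-/

/-- A finitely-branching rose tree whose nodes are labeled by natural-number
ranks: a tree is a root node (with its rank) together with a finite list of
subtrees. -/
inductive RankTree : Type where
  | node : ℕ → List RankTree → RankTree

namespace RankTree

/-- The rank of the root node of a tree. -/
def rank : RankTree → ℕ
  | node r _ => r

/-- The list of subtrees rooted at the children of the root. -/
def children : RankTree → List RankTree
  | node _ cs => cs

/-- The number of nodes of a tree. -/
def size : RankTree → ℕ
  | node _ cs => 1 + (cs.attach.map (fun c => size c.1)).sum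
decreasing_by
  have := List.sizeOf_lt_of_mem c.2
  cases c
  simp only [RankTree.node.sizeOf_spec] at *
  omega

/-- `IsNode v T` holds iff `v` is (the subtree rooted at) a node of `T`. -/
inductive IsNode : RankTree → RankTree → Prop
  | refl (T : RankTree) : IsNode T T
  | child {v c T : RankTree} : c ∈ T.children → IsNode v c → IsNode v T

/-- A tree satisfies the rank invariant if every node `v` has `rank v`
pairwise distinct children `c_1, …, c_{rank v}` (given by an injection from
`Fin (rank v)` into the positions of the children of `v`) such that
`rank (c_i) ≥ rank v − i − 1` for `1 ≤ i ≤ rank v` (with truncated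
subtraction, so the requirement is vacuous when `rank v − i − 1 < 0`). -/
def RankInvariant (T : RankTree) : Prop :=
  ∀ v : RankTree, IsNode v T →
    ∃ f : Fin v.rank → Fin v.children.length, Function.Injective f ∧
      ∀ i : Fin v.rank, (v.children.get (f i)).rank ≥ v.rank - (i.val + 1) - 1

end RankTree

theorem Nat.sum_fib_sub_add_one : ∀ r : ℕ, ∑ i : Fin r, fib (r - i) + 1 = fib (r + 2)
  | 0 => rfl
  | r + 1 => by
    rw [Fin.sum_univ_succ, add_assoc]
    simp only [Fin.val_zero, Fin.val_succ, Nat.sub_zero, Nat.add_sub_add_right]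
    rw [sum_fib_sub_add_one r, fib_add_two (n := r + 1)]

theorem List.sum_comp_get_le_sum_map {α M : Type*} [AddCommMonoid M] [PartialOrder M]
    [CanonicallyOrderedAdd M] (l : List α) (g : α → M) {r : ℕ} {f : Fin r → Fin l.length}
    (hf : Function.Injective f) : ∑ i, g (l.get (f i)) ≤ (l.map g).sum :=
  calc ∑ i, g (l.get (f i)) = ∑ j ∈ Finset.univ.image f, g (l.get j) := by
        rw [Finset.sum_image fun _ _ _ _ h => hf h]
    _ ≤ ∑ j, g (l.get j) := Finset.sum_le_sum_of_subset (Finset.subset_univ _)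
    _ = (l.map g).sum := Fin.sum_univ_fun_getElem l g

open Real goldenRatio in
theorem Real.goldenRatio_pow_le_fib_add_two (n : ℕ) : φ ^ n ≤ Nat.fib (n + 2) := by
  have hψ := neg_one_lt_goldenConj
  have hfib : (0 : ℝ) ≤ Nat.fib n := Nat.cast_nonneg _
  rw [← fib_succ_sub_goldenConj_mul_fib, Nat.fib_add_two, Nat.cast_add, add_comm]
  nlinarith

namespace RankTree

theorem size_node (r : ℕ) (cs : List RankTree) :
    (node r cs).size = 1 + (cs.map size).sum := by
  rw [size, List.map_attach_eq_pmap, List.pmap_eq_map]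

theorem RankInvariant.of_mem_children {T c : RankTree} (hT : T.RankInvariant)
    (hc : c ∈ T.children) : c.RankInvariant :=
  fun v hv => hT v (.child hc hv)

theorem fib_rank_add_two_le_size : ∀ T : RankTree, T.RankInvariant → Nat.fib (T.rank + 2) ≤ T.size
  | node r cs, hT => by
    obtain ⟨f, hf, hrank⟩ := hT _ (.refl _)
    have hchild (i : Fin r) : Nat.fib (r - i) ≤ (cs.get (f i)).size := by
      have hmem : cs.get (f i) ∈ cs := List.get_mem cs (f i)
      refine (Nat.fib_mono ?_).trans (fib_rank_add_two_le_size _ (hT.of_mem_children hmem))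
      have : (cs.get (f i)).rank ≥ r - (i + 1) - 1 := hrank i
      omega
    calc Nat.fib (r + 2) = ∑ i : Fin r, Nat.fib (r - i) + 1 := (Nat.sum_fib_sub_add_one r).symm
      _ ≤ ∑ i : Fin r, (cs.get (f i)).size + 1 := by gcongr with i; exact hchild i
      _ ≤ (cs.map size).sum + 1 := by gcongr; exact cs.sum_comp_get_le_sum_map size hf
      _ = (node r cs).size := by rw [size_node, add_comm]
decreasing_by
  have := List.sizeOf_lt_of_mem hmem
  simp only [node.sizeOf_spec]
  omega

end RankTree

/-- In a finite rooted tree with `n` nodes satisfying the rank invariant, the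
rank of the root is at most `log n / log φ`, where `φ = (1 + √5)/2` is the
golden ratio and `log` is the natural logarithm. -/
theorem rank_le_log_size_of_rankInvariant (T : RankTree) (n : ℕ)
    (hn : T.size = n) (hT : T.RankInvariant) :
    (T.rank : ℝ) ≤ Real.log n / Real.log ((1 + Real.sqrt 5) / 2) := by
  have hpow : Real.goldenRatio ^ T.rank ≤ n :=
    calc Real.goldenRatio ^ T.rank ≤ Nat.fib (T.rank + 2) := Real.goldenRatio_pow_le_fib_add_two _
      _ ≤ n := mod_cast hn ▸ T.fib_rank_add_two_le_size hT
  rw [le_div_iff₀ (Real.log_pos Real.one_lt_goldenRatio), ← Real.log_pow]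
  exact Real.log_le_log (by positivity) hpow
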